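/- The nine octonionic Pauli matrices on 𝕆² ≅ ℝ¹⁶, given in block form by I₁ = [[0,Id],[Id,0]], Iₐ = [[0,-R_u],[R_u,0]] for u ∈ {i,j,k,e,f,g,h} (a = 2,...,8), and I₉ = [[Id,0],[0,-Id]], where R_u is right octonion multiplication by u, form a Clifford system of rank 9: each Iα is a self-adjoint involution and they pairwise anticommute. -/

import Mathlib

/-!
For `(t, w) ∈ ℝ ⊕ 𝕆 ≅ ℝ⁹` put `I_{(t,w)} = [[t, R_w̄], [R_w, -t]]` on `𝕆²`. Linearized right
alternativity, `(x w') w̄ + (x w) w̄' = 2⟨w, w'⟩ x`, gives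
`I_v I_v' + I_v' I_v = 2⟨v, v'⟩ Id`, and `⟨x w, y⟩ = ⟨x, y w̄⟩` makes every `I_v` symmetric; both
octonion identities are polynomial identities checked in coordinates. The nine Pauli matrices are
`I_v` for the standard orthonormal basis of `ℝ⁹`: `I₁ = I_{(0,1)}`, `Iₐ = I_{(0,u)}` (as `ū = -u`)
and `I₉ = I_{(1,0)}`.
-/

noncomputable section

open Quaternion

/-- The octonions via Cayley–Dickson on ℍ; `h₁ + h₂e ↔ (h₁,h₂)`. -/
abbrev Oct := ℍ[ℝ] × ℍ[ℝ]

/-- Cayley–Dickson multiplication. -/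
def omul (x y : Oct) : Oct :=
  (x.1 * y.1 - star y.2 * x.2, x.2 * star y.1 + y.2 * x.1)

def qi : ℍ[ℝ] := ⟨0,1,0,0⟩
def qj : ℍ[ℝ] := ⟨0,0,1,0⟩
def qk : ℍ[ℝ] := ⟨0,0,0,1⟩

/-- The standard orthonormal basis `1,i,j,k,e,f,g,h` of 𝕆 ≅ ℝ⁸. -/
def oe : Fin 8 → Oct
  | 0 => (1, 0) | 1 => (qi, 0) | 2 => (qj, 0) | 3 => (qk, 0)
  | 4 => (0, 1) | 5 => (0, qi) | 6 => (0, qj) | 7 => (0, qk)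

/-- The Euclidean inner product on 𝕆 ≅ ℝ⁸. -/
def ip8 (x y : Oct) : ℝ := (x.1 * star y.1).re + (x.2 * star y.2).re

/-- The Euclidean inner product on 𝕆² ≅ ℝ¹⁶. -/
def ip16 (x y : Oct × Oct) : ℝ := ip8 x.1 y.1 + ip8 x.2 y.2

/-- The nine octonionic Pauli matrices on 𝕆² ≅ ℝ¹⁶:
`I₁ = [[0,Id],[Id,0]]`, `Iₐ = [[0,-R_u],[R_u,0]]` for `u = i,j,k,e,f,g,h` (a = 2,…,8),
`I₉ = [[Id,0],[0,-Id]]`, where `R_u` is right octonion multiplication by `u`. -/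
def oPauli : Fin 9 → Oct × Oct → Oct × Oct
  | 0 => fun x => (x.2, x.1)
  | 1 => fun x => (-(omul x.2 (oe 1)), omul x.1 (oe 1))
  | 2 => fun x => (-(omul x.2 (oe 2)), omul x.1 (oe 2))
  | 3 => fun x => (-(omul x.2 (oe 3)), omul x.1 (oe 3))
  | 4 => fun x => (-(omul x.2 (oe 4)), omul x.1 (oe 4))
  | 5 => fun x => (-(omul x.2 (oe 5)), omul x.1 (oe 5))
  | 6 => fun x => (-(omul x.2 (oe 6)), omul x.1 (oe 6))
  | 7 => fun x => (-(omul x.2 (oe 7)), omul x.1 (oe 7))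
  | 8 => fun x => (x.1, -x.2)

def ostar (x : Oct) : Oct := (star x.1, -x.2)

@[simp] lemma ostar_ostar (x : Oct) : ostar (ostar x) = x := by
  simp [ostar]

lemma ostar_zero : ostar 0 = 0 := by
  simp [ostar]

lemma ostar_oe_zero : ostar (oe 0) = oe 0 := by
  simp [ostar, oe]

lemma qi_coords : qi.re = 0 ∧ qi.imI = 1 ∧ qi.imJ = 0 ∧ qi.imK = 0 := ⟨rfl, rfl, rfl, rfl⟩
lemma qj_coords : qj.re = 0 ∧ qj.imI = 0 ∧ qj.imJ = 1 ∧ qj.imK = 0 := ⟨rfl, rfl, rfl, rfl⟩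
lemma qk_coords : qk.re = 0 ∧ qk.imI = 0 ∧ qk.imJ = 0 ∧ qk.imK = 1 := ⟨rfl, rfl, rfl, rfl⟩

lemma ostar_oe {a : Fin 8} (ha : a ≠ 0) : ostar (oe a) = -oe a := by
  fin_cases a <;> simp_all [ostar, oe, Quaternion.star_eq_neg, qi_coords, qj_coords, qk_coords]

lemma omul_neg (x w : Oct) : omul x (-w) = -omul x w := by
  ext1 <;> simp only [omul, Prod.fst_neg, Prod.snd_neg, star_neg, neg_mul, mul_neg] <;> abel

lemma omul_zero (x : Oct) : omul x 0 = 0 := by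
  simp [omul]

lemma omul_oe_zero (x : Oct) : omul x (oe 0) = x := by
  simp [omul, oe]

def rmul (w : Oct) : Oct →ₗ[ℝ] Oct where
  toFun x := omul x w
  map_add' x y := by
    simp only [omul, Prod.fst_add, Prod.snd_add, add_mul, mul_add, Prod.mk_add_mk]
    congr 1 <;> abel
  map_smul' t x := by
    simp only [omul, Prod.smul_fst, Prod.smul_snd, smul_mul_assoc, mul_smul_comm,
      RingHom.id_apply, Prod.smul_mk, smul_sub, smul_add]

lemma rmul_apply (w x : Oct) : rmul w x = omul x w := rfl

lemma ip8_eq_inner (x y : Oct) : ip8 x y = inner ℝ x.1 y.1 + inner ℝ x.2 y.2 := by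
  simp only [ip8, Quaternion.inner_def]

lemma ip8_zero_left (x : Oct) : ip8 0 x = 0 := by
  simp [ip8]

lemma ip8_zero_right (x : Oct) : ip8 x 0 = 0 := by
  simp [ip8]

lemma ip8_ostar_ostar (w w' : Oct) : ip8 (ostar w) (ostar w') = ip8 w w' := by
  simp [ip8, ostar]

lemma ip8_oe (a b : Fin 8) : ip8 (oe a) (oe b) = if a = b then 1 else 0 := by
  fin_cases a <;> fin_cases b <;> simp [ip8, oe, qi_coords, qj_coords, qk_coords]

lemma rmul_rmul_ostar_add (w w' x : Oct) :
    rmul (ostar w) (rmul w' x) + rmul (ostar w') (rmul w x) = (2 * ip8 w w') • x := by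
  ext <;>
    simp only [rmul_apply, omul, ostar, ip8, star_neg, star_star, neg_mul, mul_neg, sub_neg_eq_add,
      neg_sub, neg_add_rev, Prod.mk_add_mk, Prod.smul_fst, Prod.smul_snd, smul_eq_mul,
      re_add, re_sub, re_neg, re_mul, re_star, re_smul, imI_add, imI_sub, imI_neg, imI_mul,
      imI_star, imI_smul, imJ_add, imJ_sub, imJ_neg, imJ_mul, imJ_star, imJ_smul,
      imK_add, imK_sub, imK_neg, imK_mul, imK_star, imK_smul] <;>
    ring

lemma ip8_rmul_left (w x y : Oct) : ip8 (rmul w x) y = ip8 x (rmul (ostar w) y) := by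
  simp only [rmul_apply, omul, ostar, ip8, star_neg, star_star, star_add, star_mul, neg_neg,
    neg_mul, mul_neg, sub_neg_eq_add, neg_sub, neg_add_rev, re_add, re_sub, re_neg, re_mul,
    re_star, imI_add, imI_sub, imI_neg, imI_mul, imI_star, imJ_add, imJ_sub, imJ_neg, imJ_mul,
    imJ_star, imK_add, imK_sub, imK_neg, imK_mul, imK_star]
  ring

def cliffOp (t : ℝ) (w : Oct) (x : Oct × Oct) : Oct × Oct :=
  (t • x.1 + rmul (ostar w) x.2, rmul w x.1 - t • x.2)

lemma cliffOp_cliffOp_add (t t' : ℝ) (w w' : Oct) (x : Oct × Oct) :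
    cliffOp t w (cliffOp t' w' x) + cliffOp t' w' (cliffOp t w x) =
      (2 * (t * t' + ip8 w w')) • x := by
  have h₁ := rmul_rmul_ostar_add w w' x.1
  have h₂ := rmul_rmul_ostar_add (ostar w) (ostar w') x.2
  rw [ostar_ostar, ostar_ostar, ip8_ostar_ostar] at h₂
  ext1 <;> simp only [cliffOp, map_add, map_sub, map_smul, Prod.fst_add, Prod.snd_add,
    Prod.smul_fst, Prod.smul_snd]
  · linear_combination (norm := module) h₁
  · linear_combination (norm := module) h₂

lemma cliffOp_cliffOp_self {t : ℝ} {w : Oct} (h : t * t + ip8 w w = 1) (x : Oct × Oct) :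
    cliffOp t w (cliffOp t w x) = x := by
  have hsum := cliffOp_cliffOp_add t t w w x
  rw [h, ← two_smul ℝ (cliffOp t w _)] at hsum
  simpa using hsum

lemma cliffOp_anticomm {t t' : ℝ} {w w' : Oct} (h : t * t' + ip8 w w' = 0) (x : Oct × Oct) :
    cliffOp t w (cliffOp t' w' x) = -cliffOp t' w' (cliffOp t w x) := by
  have hsum := cliffOp_cliffOp_add t t' w w' x
  rw [h, mul_zero, zero_smul] at hsum
  exact eq_neg_of_add_eq_zero_left hsum

lemma ip16_cliffOp_left (t : ℝ) (w : Oct) (x y : Oct × Oct) :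
    ip16 (cliffOp t w x) y = ip16 x (cliffOp t w y) := by
  have h₁ := ip8_rmul_left (ostar w) x.2 y.1
  have h₂ := ip8_rmul_left w x.1 y.2
  rw [ostar_ostar] at h₁
  simp only [ip16, cliffOp, ip8_eq_inner, Prod.fst_add, Prod.snd_add, Prod.fst_sub, Prod.snd_sub,
    Prod.smul_fst, Prod.smul_snd, inner_add_left, inner_add_right, inner_sub_left,
    inner_sub_right, real_inner_smul_left, real_inner_smul_right] at *
  linarith

def pauliCoeff (α : Fin 9) : ℝ × Oct :=
  if h : (α : ℕ) < 8 then (0, oe ⟨α, h⟩) else (1, 0)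

lemma pauliCoeff_orthonormal (α β : Fin 9) :
    (pauliCoeff α).1 * (pauliCoeff β).1 + ip8 (pauliCoeff α).2 (pauliCoeff β).2 =
      if α = β then 1 else 0 := by
  unfold pauliCoeff
  split_ifs <;> simp [ip8_oe, ip8_zero_left, ip8_zero_right, Fin.ext_iff] <;> omega

lemma oPauli_eq_cliffOp (α : Fin 9) : oPauli α = cliffOp (pauliCoeff α).1 (pauliCoeff α).2 := by
  funext x
  fin_cases α <;>
    simp [oPauli, cliffOp, pauliCoeff, rmul_apply, ostar_oe, ostar_oe_zero, ostar_zero, omul_neg,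
      omul_oe_zero, omul_zero]

/-- The nine octonionic Pauli matrices form a Clifford system of rank 9 on ℝ¹⁶:
each is a self-adjoint involution and they pairwise anticommute. -/
theorem oPauli_clifford_system :
    (∀ α : Fin 9, ∀ x : Oct × Oct, oPauli α (oPauli α x) = x) ∧
    (∀ α : Fin 9, ∀ x y : Oct × Oct, ip16 (oPauli α x) y = ip16 x (oPauli α y)) ∧
    (∀ α β : Fin 9, α ≠ β →
      ∀ x : Oct × Oct, oPauli α (oPauli β x) = - oPauli β (oPauli α x)) := by
  simp only [oPauli_eq_cliffOp]
  refine ⟨fun α => cliffOp_cliffOp_self ?_, fun α => ip16_cliffOp_left _ _,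
    fun α β hαβ => cliffOp_anticomm ?_⟩
  · simpa using pauliCoeff_orthonormal α α
  · simpa [hαβ] using pauliCoeff_orthonormal α β
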